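/- Suppose b = z_{t0}. Then: (i) if (U*, X*) is an optimal solution of Problem (P) with initial time t0, initial state x_{t0} and level b (admissible, with cost less than or equal to that of every admissible pair), then, defining V*_t = E[g(X*_T) | ℱ_{t0:t+1}] − E[g(X*_T) | ℱ_{t0:t}] and Z*_{t0} = z_{t0}, Z*_{t+1} = Z*_t + V*_t, the quadruple (U*, V*, X*, Z*) is an optimal solution of Problem (E) with initial point (x_{t0}, z_{t0}); (ii) if (U♭, V♭, X♭, Z♭) is an optimal solution of Problem (E) with initial point (x_{t0}, z_{t0}), then (U♭, X♭) is an optimal solution of Problem (P) with level b. In particular the two problems have the same optimal value. -/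

import Mathlib

/-!
For an admissible pair of (P), `M_t = E[g(X_T) | ℱ_{t0:t}]` is a martingale, so its increments
`V_t` have zero conditional mean, and `Z_T = z_{t0} + M_T - M_{t0} = z_{t0} + g(X_T) - E[g(X_T)]`,
which dominates `g(X_T)` precisely because `E[g(X_T)] ≤ z_{t0}`. Conversely, increments with zero
conditional mean give `E[Z_T] = z_{t0}`, so `0 ≤ g(X_T) ≤ Z_T` forces `g(X_T)` to be integrable
with `E[g(X_T)] ≤ z_{t0}`. Thus `(U, X)` is admissible for (P) iff it extends to an admissible
quadruple of (E); since the costs agree, so do optimal solutions and optimal values.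
-/

open MeasureTheory ProbabilityTheory
open scoped ENNReal BigOperators

section Setup

variable {Ω : Type*} [MeasurableSpace Ω] {T m : ℕ}
  {𝕏 : ℕ → Type*} [∀ t, MeasurableSpace (𝕏 t)]
  {𝕌 : ℕ → Type*} [∀ t, MeasurableSpace (𝕌 t)]
  {𝕎 : ℕ → Type*} [∀ t, MeasurableSpace (𝕎 t)]

/-- The σ-field `ℱ_{t0:t} = σ(w_{t0+1}, …, w_t)` generated by the noise variables,
with `ℱ_{t0:t0}` the trivial σ-field. -/
def noiseFiltration (w : (t : ℕ) → Ω → 𝕎 t) (t0 t : ℕ) : MeasurableSpace Ω :=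
  ⨆ s ∈ Set.Icc (t0 + 1) t, MeasurableSpace.comap (w s) inferInstance

variable (μ : Measure Ω) (w : (t : ℕ) → Ω → 𝕎 t)
  (f : (t : ℕ) → 𝕏 t → 𝕌 t → 𝕎 (t + 1) → 𝕏 (t + 1))
  (L : (t : ℕ) → 𝕏 t → 𝕌 t → 𝕎 (t + 1) → ℝ≥0∞)
  (K : 𝕏 T → ℝ≥0∞) (g : 𝕏 T → Fin m → ℝ)

/-- Admissible pair `(U, X)` for Problem (P) with initial time `t0`, initial state `x0`
and constraint level `b`: initial condition, dynamics, nonanticipativity, and the final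
expectation constraint `E[g(X_T)] ≤ b` (componentwise, `g(X_T)` being integrable). -/
def AdmissibleP (t0 : ℕ) (x0 : 𝕏 t0) (b : Fin m → ℝ)
    (U : (t : ℕ) → Ω → 𝕌 t) (X : (t : ℕ) → Ω → 𝕏 t) : Prop :=
  (∀ ω, X t0 ω = x0) ∧
  (∀ t, t0 ≤ t → t < T → ∀ ω, X (t + 1) ω = f t (X t ω) (U t ω) (w (t + 1) ω)) ∧
  (∀ t, t0 ≤ t → t < T →
    MeasurableSpace.comap (U t) inferInstance ≤ noiseFiltration w t0 t) ∧
  Integrable (fun ω => g (X T ω)) μ ∧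
  (∀ i, ∫ ω, g (X T ω) i ∂μ ≤ b i)

/-- Cost of a pair `(U, X)` in Problem (P). -/
noncomputable def costP (t0 : ℕ) (U : (t : ℕ) → Ω → 𝕌 t) (X : (t : ℕ) → Ω → 𝕏 t) : ℝ≥0∞ :=
  ∫⁻ ω, (∑ t ∈ Finset.Ico t0 T, L t (X t ω) (U t ω) (w (t + 1) ω)) + K (X T ω) ∂μ

/-- Admissible quadruple `(U, V, X, Z)` for Problem (E) with initial time `t0` and
initial point `(x0, z0)`: dynamics and nonanticipativity for `(U, X)`, integrability,
nonanticipativity and the martingale-type constraint `E[V_t | ℱ_{t0:t}] = 0` for `V`,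
the dynamics `Z_{t+1} = Z_t + V_t`, and the a.s. final constraint `g(X_T) ≤ Z_T`. -/
def AdmissibleE (t0 : ℕ) (x0 : 𝕏 t0) (z0 : Fin m → ℝ)
    (U : (t : ℕ) → Ω → 𝕌 t) (V : ℕ → Ω → Fin m → ℝ)
    (X : (t : ℕ) → Ω → 𝕏 t) (Z : ℕ → Ω → Fin m → ℝ) : Prop :=
  (∀ ω, X t0 ω = x0) ∧
  (∀ t, t0 ≤ t → t < T → ∀ ω, X (t + 1) ω = f t (X t ω) (U t ω) (w (t + 1) ω)) ∧
  (∀ t, t0 ≤ t → t < T →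
    MeasurableSpace.comap (U t) inferInstance ≤ noiseFiltration w t0 t) ∧
  (∀ t, t0 ≤ t → t < T →
    Integrable (V t) μ ∧
    MeasurableSpace.comap (V t) inferInstance ≤ noiseFiltration w t0 (t + 1) ∧
    μ[V t | noiseFiltration w t0 t] =ᵐ[μ] 0) ∧
  (∀ ω, Z t0 ω = z0) ∧
  (∀ t, t0 ≤ t → t < T → ∀ ω, Z (t + 1) ω = Z t ω + V t ω) ∧
  (∀ᵐ ω ∂μ, ∀ i, g (X T ω) i ≤ Z T ω i)

/-- Cost of a quadruple `(U, V, X, Z)` in Problem (E) (the same expression as in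
Problem (P)). -/
noncomputable def costE (t0 : ℕ) (U : (t : ℕ) → Ω → 𝕌 t) (V : ℕ → Ω → Fin m → ℝ)
    (X : (t : ℕ) → Ω → 𝕏 t) (Z : ℕ → Ω → Fin m → ℝ) : ℝ≥0∞ :=
  ∫⁻ ω, (∑ t ∈ Finset.Ico t0 T, L t (X t ω) (U t ω) (w (t + 1) ω)) + K (X T ω) ∂μ

end Setup


section NoiseFiltration

variable {Ω : Type*} {𝕎 : ℕ → Type*} [∀ t, MeasurableSpace (𝕎 t)]
  {w : (t : ℕ) → Ω → 𝕎 t} {t0 : ℕ}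

lemma noiseFiltration_mono : Monotone (noiseFiltration w t0) := fun _ t' h =>
  iSup₂_le fun s hs => le_iSup₂
    (f := fun s (_ : s ∈ Set.Icc (t0 + 1) t') => MeasurableSpace.comap (w s) inferInstance)
    s ⟨hs.1, hs.2.trans h⟩

lemma noiseFiltration_le [m0 : MeasurableSpace Ω] (hw : ∀ t, Measurable (w t)) (t : ℕ) :
    noiseFiltration w t0 t ≤ m0 :=
  iSup₂_le fun s _ => measurable_iff_comap_le.mp (hw s)

lemma noiseFiltration_self : noiseFiltration w t0 t0 = ⊥ := by
  simp [noiseFiltration]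

lemma measurable_noiseFiltration_succ {t : ℕ} (ht : t0 ≤ t) :
    Measurable[noiseFiltration w t0 (t + 1)] (w (t + 1)) :=
  measurable_iff_comap_le.mpr <| le_iSup₂
    (f := fun s (_ : s ∈ Set.Icc (t0 + 1) (t + 1)) => MeasurableSpace.comap (w s) inferInstance)
    (t + 1) ⟨by omega, le_rfl⟩

def MeasureTheory.Filtration.noise [m0 : MeasurableSpace Ω] (hw : ∀ t, Measurable (w t))
    (t0 : ℕ) : Filtration ℕ m0 :=
  ⟨noiseFiltration w t0, noiseFiltration_mono, noiseFiltration_le hw⟩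

end NoiseFiltration

lemma measurable_state_of_nonanticipative {Ω : Type*} {ℱ : ℕ → MeasurableSpace Ω}
    {𝕏 𝕌 𝕎 : ℕ → Type*} [∀ t, MeasurableSpace (𝕏 t)] [∀ t, MeasurableSpace (𝕌 t)]
    [∀ t, MeasurableSpace (𝕎 t)] {f : (t : ℕ) → 𝕏 t → 𝕌 t → 𝕎 (t + 1) → 𝕏 (t + 1)}
    {w : (t : ℕ) → Ω → 𝕎 t} {U : (t : ℕ) → Ω → 𝕌 t} {X : (t : ℕ) → Ω → 𝕏 t}
    {t0 T : ℕ} {x0 : 𝕏 t0} (hℱ : Monotone ℱ)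
    (hf : ∀ t, Measurable fun p : 𝕏 t × 𝕌 t × 𝕎 (t + 1) => f t p.1 p.2.1 p.2.2)
    (hw : ∀ t, t0 ≤ t → Measurable[ℱ (t + 1)] (w (t + 1)))
    (hX0 : ∀ ω, X t0 ω = x0)
    (hdyn : ∀ t, t0 ≤ t → t < T → ∀ ω, X (t + 1) ω = f t (X t ω) (U t ω) (w (t + 1) ω))
    (hU : ∀ t, t0 ≤ t → t < T → MeasurableSpace.comap (U t) inferInstance ≤ ℱ t) :
    ∀ t, t0 ≤ t → t ≤ T → Measurable[ℱ t] (X t) := by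
  intro t ht
  induction t, ht using Nat.le_induction with
  | base =>
    intro _
    rw [funext hX0]
    exact measurable_const
  | succ t ht ih =>
    intro htT
    have hXt := (ih (by omega)).mono (hℱ t.le_succ) le_rfl
    have hUt := measurable_iff_comap_le.mpr ((hU t ht htT).trans (hℱ t.le_succ))
    rw [funext (hdyn t ht htT)]
    exact (hf t).comp (hXt.prodMk (hUt.prodMk (hw t ht)))

lemma eq_add_sum_Ico_of_succ_eq_add {M : Type*} [AddCommMonoid M] {Z V : ℕ → M} {a b : ℕ}
    (h : ∀ t, a ≤ t → t < b → Z (t + 1) = Z t + V t) {s : ℕ} (has : a ≤ s) (hsb : s ≤ b) :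
    Z s = Z a + ∑ t ∈ Finset.Ico a s, V t := by
  induction s, has using Nat.le_induction with
  | base => simp
  | succ s has ih =>
    rw [h s has (by omega), ih (by omega), Finset.sum_Ico_succ_top has, add_assoc]

section Increments

variable {Ω E : Type*} [m0 : MeasurableSpace Ω] {μ : Measure Ω}
  [NormedAddCommGroup E] [NormedSpace ℝ E]

lemma integral_eq_zero_of_condExp_ae_eq_zero [CompleteSpace E] {m : MeasurableSpace Ω}
    (hm : m ≤ m0) [SigmaFinite (μ.trim hm)] {V : Ω → E} (hV : μ[V | m] =ᵐ[μ] 0) :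
    ∫ ω, V ω ∂μ = 0 := by
  rw [← integral_condExp hm, integral_congr_ae hV, integral_zero']

lemma integral_eq_of_condExp_increment_ae_eq_zero [CompleteSpace E] [IsProbabilityMeasure μ]
    {ℱ : ℕ → MeasurableSpace Ω} (hℱ : ∀ t, ℱ t ≤ m0) {V Z : ℕ → Ω → E} {z0 : E} {a b : ℕ}
    (hab : a ≤ b) (hZ0 : ∀ ω, Z a ω = z0)
    (hZ : ∀ t, a ≤ t → t < b → ∀ ω, Z (t + 1) ω = Z t ω + V t ω)
    (hV : ∀ t, a ≤ t → t < b → Integrable (V t) μ ∧ μ[V t | ℱ t] =ᵐ[μ] 0) :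
    Integrable (Z b) μ ∧ ∫ ω, Z b ω ∂μ = z0 := by
  have hVint : ∀ t ∈ Finset.Ico a b, Integrable (V t) μ := fun t ht =>
    (hV t (Finset.mem_Ico.mp ht).1 (Finset.mem_Ico.mp ht).2).1
  have hZb : Z b = fun ω => z0 + ∑ t ∈ Finset.Ico a b, V t ω := by
    rw [eq_add_sum_Ico_of_succ_eq_add (fun t h1 h2 => funext (hZ t h1 h2)) hab le_rfl,
      funext hZ0]
    ext ω
    simp only [Pi.add_apply, Finset.sum_apply]
  rw [hZb]
  refine ⟨(integrable_const z0).add (integrable_finsetSum _ hVint), ?_⟩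
  rw [integral_add (integrable_const z0) (integrable_finsetSum _ hVint),
    integral_finsetSum _ hVint]
  have hmean : ∀ t ∈ Finset.Ico a b, ∫ ω, V t ω ∂μ = 0 := fun t ht =>
    integral_eq_zero_of_condExp_ae_eq_zero (hℱ t)
      (hV t (Finset.mem_Ico.mp ht).1 (Finset.mem_Ico.mp ht).2).2
  simp [Finset.sum_eq_zero hmean]

namespace MeasureTheory.Martingale

variable {ℱ : Filtration ℕ m0} {M : ℕ → Ω → E}

lemma stronglyMeasurable_succ_sub (hM : Martingale M ℱ μ) (t : ℕ) :
    StronglyMeasurable[ℱ (t + 1)] (M (t + 1) - M t) :=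
  (hM.stronglyMeasurable (t + 1)).sub ((hM.stronglyMeasurable t).mono (ℱ.mono t.le_succ))

lemma condExp_succ_sub_ae_eq_zero [CompleteSpace E] [SigmaFiniteFiltration μ ℱ]
    (hM : Martingale M ℱ μ) (t : ℕ) : μ[M (t + 1) - M t | ℱ t] =ᵐ[μ] 0 := by
  have hMt : μ[M t | ℱ t] = M t :=
    condExp_of_stronglyMeasurable (ℱ.le t) (hM.stronglyMeasurable t) (hM.integrable t)
  filter_upwards [condExp_sub (hM.integrable (t + 1)) (hM.integrable t) (ℱ t),
    hM.condExp_ae_eq t.le_succ] with ω hsub hsucc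
  simp [hsub, hsucc, hMt]

end MeasureTheory.Martingale

end Increments

lemma integrable_of_nonneg_of_le_ae {Ω ι : Type*} [MeasurableSpace Ω] [Fintype ι]
    {μ : Measure Ω} {G Z : Ω → ι → ℝ} (hG : AEStronglyMeasurable G μ) (hG0 : ∀ ω, 0 ≤ G ω)
    (hGZ : G ≤ᵐ[μ] Z) (hZ : Integrable Z μ) : Integrable G μ :=
  integrable_pi_iff.mpr fun i =>
    integrable_of_le_of_le ((continuous_apply i).comp_aestronglyMeasurable hG)
      (Filter.Eventually.of_forall fun ω => hG0 ω i) (hGZ.mono fun _ h => h i)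
      (integrable_zero _ _ _) (hZ.eval i)

lemma costE_eq_costP {Ω : Type*} [MeasurableSpace Ω] {T m : ℕ} {𝕏 𝕌 𝕎 : ℕ → Type*}
    (μ : Measure Ω) (w : (t : ℕ) → Ω → 𝕎 t) (L : (t : ℕ) → 𝕏 t → 𝕌 t → 𝕎 (t + 1) → ℝ≥0∞)
    (K : 𝕏 T → ℝ≥0∞) (t0 : ℕ) (U : (t : ℕ) → Ω → 𝕌 t) (V : ℕ → Ω → Fin m → ℝ)
    (X : (t : ℕ) → Ω → 𝕏 t) (Z : ℕ → Ω → Fin m → ℝ) :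
    costE μ w L K t0 U V X Z = costP μ w L K t0 U X :=
  rfl

section Equivalence

variable {Ω : Type*} [MeasurableSpace Ω] {T m : ℕ}
  {𝕏 : ℕ → Type*} [∀ t, MeasurableSpace (𝕏 t)]
  {𝕌 : ℕ → Type*} [∀ t, MeasurableSpace (𝕌 t)]
  {𝕎 : ℕ → Type*} [∀ t, MeasurableSpace (𝕎 t)]
  {μ : Measure Ω} [IsProbabilityMeasure μ] {w : (t : ℕ) → Ω → 𝕎 t}
  {f : (t : ℕ) → 𝕏 t → 𝕌 t → 𝕎 (t + 1) → 𝕏 (t + 1)} {g : 𝕏 T → Fin m → ℝ}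
  {t0 : ℕ} {x0 : 𝕏 t0} {z0 : Fin m → ℝ}
  {U : (t : ℕ) → Ω → 𝕌 t} {V : ℕ → Ω → Fin m → ℝ}
  {X : (t : ℕ) → Ω → 𝕏 t} {Z : ℕ → Ω → Fin m → ℝ}

lemma AdmissibleE.admissibleP (hE : AdmissibleE μ w f g t0 x0 z0 U V X Z)
    (hw : ∀ t, Measurable (w t))
    (hf : ∀ t, Measurable fun p : 𝕏 t × 𝕌 t × 𝕎 (t + 1) => f t p.1 p.2.1 p.2.2)
    (hg : Measurable g) (hgpos : ∀ x i, 0 ≤ g x i) (ht0 : t0 ≤ T) :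
    AdmissibleP μ w f g t0 x0 z0 U X := by
  obtain ⟨hX0, hdyn, hU, hV, hZ0, hZ, hgZ⟩ := hE
  obtain ⟨hZint, hZmean⟩ := integral_eq_of_condExp_increment_ae_eq_zero
    (noiseFiltration_le hw) ht0 hZ0 hZ fun t h1 h2 => ⟨(hV t h1 h2).1, (hV t h1 h2).2.2⟩
  have hXT : Measurable (X T) :=
    (measurable_state_of_nonanticipative noiseFiltration_mono hf
      (fun _ => measurable_noiseFiltration_succ) hX0 hdyn hU T ht0 le_rfl).mono
      (noiseFiltration_le hw T) le_rfl
  have hGint : Integrable (fun ω => g (X T ω)) μ :=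
    integrable_of_nonneg_of_le_ae (hg.comp hXT).aestronglyMeasurable
      (fun ω i => hgpos _ i) (hgZ.mono fun _ h i => h i) hZint
  refine ⟨hX0, hdyn, hU, hGint, fun i => ?_⟩
  calc ∫ ω, g (X T ω) i ∂μ ≤ ∫ ω, Z T ω i ∂μ :=
        integral_mono_ae (hGint.eval i) (hZint.eval i) (hgZ.mono fun _ h => h i)
    _ = z0 i := by rw [← eval_integral hZint.eval, hZmean]

lemma AdmissibleP.admissibleE (hP : AdmissibleP μ w f g t0 x0 z0 U X)
    (hw : ∀ t, Measurable (w t))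
    (hf : ∀ t, Measurable fun p : 𝕏 t × 𝕌 t × 𝕎 (t + 1) => f t p.1 p.2.1 p.2.2)
    (hg : Measurable g) (ht0 : t0 ≤ T)
    (hV : ∀ t, V t = fun ω =>
      (μ[fun ω' => g (X T ω') | noiseFiltration w t0 (t + 1)]) ω
        - (μ[fun ω' => g (X T ω') | noiseFiltration w t0 t]) ω)
    (hZ0 : ∀ ω, Z t0 ω = z0) (hZ : ∀ t, t0 ≤ t → t < T → ∀ ω, Z (t + 1) ω = Z t ω + V t ω) :
    AdmissibleE μ w f g t0 x0 z0 U V X Z := by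
  obtain ⟨hX0, hdyn, hU, hGint, hGmean⟩ := hP
  set ℱ := Filtration.noise hw t0
  set G : Ω → Fin m → ℝ := fun ω => g (X T ω)
  have hM : Martingale (fun t => μ[G | ℱ t]) ℱ μ := martingale_condExp G ℱ μ
  have hVM : ∀ t, V t = μ[G | ℱ (t + 1)] - μ[G | ℱ t] := hV
  refine ⟨hX0, hdyn, hU, fun t _ _ => ?_, hZ0, hZ, ?_⟩
  · rw [hVM t]
    exact ⟨(hM.integrable _).sub (hM.integrable _),
      measurable_iff_comap_le.mp (hM.stronglyMeasurable_succ_sub t).measurable,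
      hM.condExp_succ_sub_ae_eq_zero t⟩
  have hMT : μ[G | ℱ T] = G := condExp_of_stronglyMeasurable (ℱ.le T)
    (hg.comp (measurable_state_of_nonanticipative noiseFiltration_mono hf
      (fun _ => measurable_noiseFiltration_succ) hX0 hdyn hU T ht0 le_rfl)).stronglyMeasurable
    hGint
  have hMt0 : μ[G | ℱ t0] = fun _ => ∫ ω, G ω ∂μ := by
    rw [show ℱ t0 = ⊥ from noiseFiltration_self]
    exact condExp_bot G
  have hZT : Z T = fun ω => z0 + (G ω - ∫ ω, G ω ∂μ) := by
    rw [eq_add_sum_Ico_of_succ_eq_add (fun t h1 h2 => funext (hZ t h1 h2)) ht0 le_rfl,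
      funext hZ0]
    simp only [hVM, Finset.sum_Ico_sub (fun t => μ[G | ℱ t]) ht0, hMT, hMt0]
    rfl
  refine Filter.Eventually.of_forall fun ω i => ?_
  have hmean := hGmean i
  rw [← eval_integral hGint.eval] at hmean
  simp only [hZT, Pi.add_apply, Pi.sub_apply]
  linarith

lemma AdmissibleP.exists_admissibleE (hP : AdmissibleP μ w f g t0 x0 z0 U X)
    (hw : ∀ t, Measurable (w t))
    (hf : ∀ t, Measurable fun p : 𝕏 t × 𝕌 t × 𝕎 (t + 1) => f t p.1 p.2.1 p.2.2)
    (hg : Measurable g) (ht0 : t0 ≤ T) :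
    ∃ V Z, AdmissibleE μ w f g t0 x0 z0 U V X Z := by
  set V : ℕ → Ω → Fin m → ℝ := fun t ω =>
    (μ[fun ω' => g (X T ω') | noiseFiltration w t0 (t + 1)]) ω
      - (μ[fun ω' => g (X T ω') | noiseFiltration w t0 t]) ω
  refine ⟨V, fun t ω => z0 + ∑ s ∈ Finset.Ico t0 t, V s ω,
    hP.admissibleE hw hf hg ht0 (fun _ => rfl) (fun _ => by simp) fun t ht _ _ => ?_⟩
  rw [Finset.sum_Ico_succ_top ht, add_assoc]

end Equivalence

theorem equivalence_P_E_general
    {Ω : Type*} [MeasurableSpace Ω] {T m : ℕ}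
    {𝕏 : ℕ → Type*} [∀ t, MeasurableSpace (𝕏 t)]
    {𝕌 : ℕ → Type*} [∀ t, MeasurableSpace (𝕌 t)]
    {𝕎 : ℕ → Type*} [∀ t, MeasurableSpace (𝕎 t)]
    (μ : Measure Ω) [IsProbabilityMeasure μ]
    (w : (t : ℕ) → Ω → 𝕎 t) (hw : ∀ t, Measurable (w t))
    (f : (t : ℕ) → 𝕏 t → 𝕌 t → 𝕎 (t + 1) → 𝕏 (t + 1))
    (hf : ∀ t, Measurable fun p : 𝕏 t × 𝕌 t × 𝕎 (t + 1) => f t p.1 p.2.1 p.2.2)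
    (L : (t : ℕ) → 𝕏 t → 𝕌 t → 𝕎 (t + 1) → ℝ≥0∞)
    (K : 𝕏 T → ℝ≥0∞)
    (g : 𝕏 T → Fin m → ℝ) (hg : Measurable g) (hgpos : ∀ x i, 0 ≤ g x i)
    (t0 : ℕ) (ht0 : t0 ≤ T) (x0 : 𝕏 t0) (z0 : Fin m → ℝ) :
    -- (i) an optimal solution of (P) induces an optimal solution of (E)
    (∀ (Ustar : (t : ℕ) → Ω → 𝕌 t) (Xstar : (t : ℕ) → Ω → 𝕏 t),
      AdmissibleP μ w f g t0 x0 z0 Ustar Xstar →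
      (∀ U X, AdmissibleP μ w f g t0 x0 z0 U X →
        costP μ w L K t0 Ustar Xstar ≤ costP μ w L K t0 U X) →
      ∀ (Vstar : ℕ → Ω → Fin m → ℝ),
        (∀ t, Vstar t = fun ω =>
          (μ[fun ω' => g (Xstar T ω') | noiseFiltration w t0 (t + 1)]) ω
            - (μ[fun ω' => g (Xstar T ω') | noiseFiltration w t0 t]) ω) →
      ∀ (Zstar : ℕ → Ω → Fin m → ℝ),
        (∀ ω, Zstar t0 ω = z0) →
        (∀ t, t0 ≤ t → t < T → ∀ ω, Zstar (t + 1) ω = Zstar t ω + Vstar t ω) →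
        AdmissibleE μ w f g t0 x0 z0 Ustar Vstar Xstar Zstar ∧
        ∀ U V X Z, AdmissibleE μ w f g t0 x0 z0 U V X Z →
          costE μ w L K t0 Ustar Vstar Xstar Zstar ≤ costE μ w L K t0 U V X Z) ∧
    -- (ii) an optimal solution of (E) induces an optimal solution of (P)
    (∀ (Ub : (t : ℕ) → Ω → 𝕌 t) (Vb : ℕ → Ω → Fin m → ℝ)
        (Xb : (t : ℕ) → Ω → 𝕏 t) (Zb : ℕ → Ω → Fin m → ℝ),
      AdmissibleE μ w f g t0 x0 z0 Ub Vb Xb Zb →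
      (∀ U V X Z, AdmissibleE μ w f g t0 x0 z0 U V X Z →
        costE μ w L K t0 Ub Vb Xb Zb ≤ costE μ w L K t0 U V X Z) →
      AdmissibleP μ w f g t0 x0 z0 Ub Xb ∧
      ∀ U X, AdmissibleP μ w f g t0 x0 z0 U X →
        costP μ w L K t0 Ub Xb ≤ costP μ w L K t0 U X) ∧
    -- the two problems have the same optimal value
    (⨅ (U : (t : ℕ) → Ω → 𝕌 t) (X : (t : ℕ) → Ω → 𝕏 t)
        (_ : AdmissibleP μ w f g t0 x0 z0 U X), costP μ w L K t0 U X)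
      = ⨅ (U : (t : ℕ) → Ω → 𝕌 t) (V : ℕ → Ω → Fin m → ℝ)
          (X : (t : ℕ) → Ω → 𝕏 t) (Z : ℕ → Ω → Fin m → ℝ)
          (_ : AdmissibleE μ w f g t0 x0 z0 U V X Z), costE μ w L K t0 U V X Z := by
  have hPE : ∀ U X, AdmissibleP μ w f g t0 x0 z0 U X ↔
      ∃ V Z, AdmissibleE μ w f g t0 x0 z0 U V X Z := fun U X =>
    ⟨fun hP => hP.exists_admissibleE hw hf hg ht0,
      fun ⟨_, _, hE⟩ => hE.admissibleP hw hf hg hgpos ht0⟩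
  refine ⟨fun Us Xs hP hopt Vs hV Zs hZ0 hZ =>
      ⟨hP.admissibleE hw hf hg ht0 hV hZ0 hZ,
        fun U V X Z hE => hopt U X (hE.admissibleP hw hf hg hgpos ht0)⟩,
    fun Ub Vb Xb Zb hE hopt =>
      ⟨hE.admissibleP hw hf hg hgpos ht0, fun U X hP => ?_⟩, ?_⟩
  · obtain ⟨V, Z, hE'⟩ := (hPE U X).mp hP
    exact hopt U V X Z hE'
  · simp only [hPE, iInf_exists, costE_eq_costP]
    exact iInf_congr fun U => iInf_comm

/-- **Equivalence of Problems (P) and (E) (Proposition 1).**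
Suppose `b = z_{t0}`. (i) From an optimal solution `(U*, X*)` of Problem (P), the
quadruple `(U*, V*, X*, Z*)` built from the conditional expectations of `g(X*_T)` is an
optimal solution of Problem (E). (ii) The first and third components of an optimal
solution of Problem (E) form an optimal solution of Problem (P). In particular the two
problems have the same optimal value. -/
theorem equivalence_P_E
    {Ω : Type*} [MeasurableSpace Ω] {T m : ℕ}
    {𝕏 : ℕ → Type*} [∀ t, MeasurableSpace (𝕏 t)]
    {𝕌 : ℕ → Type*} [∀ t, MeasurableSpace (𝕌 t)]
    {𝕎 : ℕ → Type*} [∀ t, MeasurableSpace (𝕎 t)]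
    (μ : Measure Ω) [IsProbabilityMeasure μ]
    (w : (t : ℕ) → Ω → 𝕎 t) (hw : ∀ t, Measurable (w t))
    (f : (t : ℕ) → 𝕏 t → 𝕌 t → 𝕎 (t + 1) → 𝕏 (t + 1))
    (hf : ∀ t, Measurable fun p : 𝕏 t × 𝕌 t × 𝕎 (t + 1) => f t p.1 p.2.1 p.2.2)
    (L : (t : ℕ) → 𝕏 t → 𝕌 t → 𝕎 (t + 1) → ℝ≥0∞)
    (hL : ∀ t, Measurable fun p : 𝕏 t × 𝕌 t × 𝕎 (t + 1) => L t p.1 p.2.1 p.2.2)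
    (K : 𝕏 T → ℝ≥0∞) (hK : Measurable K)
    (g : 𝕏 T → Fin m → ℝ) (hg : Measurable g) (hgpos : ∀ x i, 0 ≤ g x i)
    (t0 : ℕ) (ht0 : t0 ≤ T) (x0 : 𝕏 t0) (z0 : Fin m → ℝ) :
    -- (i) an optimal solution of (P) induces an optimal solution of (E)
    (∀ (Ustar : (t : ℕ) → Ω → 𝕌 t) (Xstar : (t : ℕ) → Ω → 𝕏 t),
      AdmissibleP μ w f g t0 x0 z0 Ustar Xstar →
      (∀ U X, AdmissibleP μ w f g t0 x0 z0 U X →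
        costP μ w L K t0 Ustar Xstar ≤ costP μ w L K t0 U X) →
      ∀ (Vstar : ℕ → Ω → Fin m → ℝ),
        (∀ t, Vstar t = fun ω =>
          (μ[fun ω' => g (Xstar T ω') | noiseFiltration w t0 (t + 1)]) ω
            - (μ[fun ω' => g (Xstar T ω') | noiseFiltration w t0 t]) ω) →
      ∀ (Zstar : ℕ → Ω → Fin m → ℝ),
        (∀ ω, Zstar t0 ω = z0) →
        (∀ t, t0 ≤ t → t < T → ∀ ω, Zstar (t + 1) ω = Zstar t ω + Vstar t ω) →
        AdmissibleE μ w f g t0 x0 z0 Ustar Vstar Xstar Zstar ∧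
        ∀ U V X Z, AdmissibleE μ w f g t0 x0 z0 U V X Z →
          costE μ w L K t0 Ustar Vstar Xstar Zstar ≤ costE μ w L K t0 U V X Z) ∧
    -- (ii) an optimal solution of (E) induces an optimal solution of (P)
    (∀ (Ub : (t : ℕ) → Ω → 𝕌 t) (Vb : ℕ → Ω → Fin m → ℝ)
        (Xb : (t : ℕ) → Ω → 𝕏 t) (Zb : ℕ → Ω → Fin m → ℝ),
      AdmissibleE μ w f g t0 x0 z0 Ub Vb Xb Zb →
      (∀ U V X Z, AdmissibleE μ w f g t0 x0 z0 U V X Z →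
        costE μ w L K t0 Ub Vb Xb Zb ≤ costE μ w L K t0 U V X Z) →
      AdmissibleP μ w f g t0 x0 z0 Ub Xb ∧
      ∀ U X, AdmissibleP μ w f g t0 x0 z0 U X →
        costP μ w L K t0 Ub Xb ≤ costP μ w L K t0 U X) ∧
    -- the two problems have the same optimal value
    (⨅ (U : (t : ℕ) → Ω → 𝕌 t) (X : (t : ℕ) → Ω → 𝕏 t)
        (_ : AdmissibleP μ w f g t0 x0 z0 U X), costP μ w L K t0 U X)
      = ⨅ (U : (t : ℕ) → Ω → 𝕌 t) (V : ℕ → Ω → Fin m → ℝ)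
          (X : (t : ℕ) → Ω → 𝕏 t) (Z : ℕ → Ω → Fin m → ℝ)
          (_ : AdmissibleE μ w f g t0 x0 z0 U V X Z), costE μ w L K t0 U V X Z :=
  equivalence_P_E_general μ w hw f hf L K g hg hgpos t0 ht0 x0 z0
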